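/- Let f : ℝ^d → ℝ be twice continuously differentiable and μ-strongly convex (so ∇²f(x) ⪰ μI for all x), and suppose the Hessian of f is L-Lipschitz in spectral norm: ‖∇²f(a) − ∇²f(b)‖ ≤ L‖a − b‖. Let θ* be a minimizer of f (so ∇f(θ*) = 0) and define the Newton iterate θ⁺ = θ − (∇²f(θ))⁻¹ ∇f(θ). Then ‖θ⁺ − θ*‖² ≤ (2/μ²) ‖∇²f(θ) − ∇²f(θ*)‖² ‖θ − θ*‖² + (L²/(2μ²)) ‖θ − θ*‖⁴. -/

import Mathlib

open scoped RealInnerProductSpace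

/-!
The Newton error is `θ⁺ - θ* = H(θ)⁻¹ (H(θ)(θ - θ*) - ∇f(θ))`. Strong convexity makes `H(θ)`
coercive, so by Lax–Milgram it is invertible with `‖H(θ)⁻¹‖ ≤ 1/μ`. Since `∇f(θ*) = 0`, the
residual splits as `(H(θ) - H(θ*))(θ - θ*)` plus the first-order Taylor remainder of `∇f` at `θ*`,
which the Lipschitz bound on the Hessian controls by `L/2 ‖θ - θ*‖²`. Squaring with
`(a + b)² ≤ 2(a² + b²)` gives the claim.
-/

section Coercive

variable {V : Type*} [NormedAddCommGroup V] [InnerProductSpace ℝ V] {A : V →L[ℝ] V} {μ : ℝ}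

theorem ContinuousLinearMap.mul_norm_le_norm_apply_of_coercive
    (hA : ∀ v, μ * ‖v‖ ^ 2 ≤ ⟪A v, v⟫) (v : V) : μ * ‖v‖ ≤ ‖A v‖ := by
  rcases (norm_nonneg v).eq_or_lt with hv | hv
  · rw [← hv, mul_zero]
    exact norm_nonneg _
  · refine le_of_mul_le_mul_right ?_ hv
    calc μ * ‖v‖ * ‖v‖ = μ * ‖v‖ ^ 2 := by ring
      _ ≤ ⟪A v, v⟫ := hA v
      _ ≤ ‖A v‖ * ‖v‖ := real_inner_le_norm _ _

variable [CompleteSpace V]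

theorem ContinuousLinearMap.isUnit_of_coercive (hμ : 0 < μ)
    (hA : ∀ v, μ * ‖v‖ ^ 2 ≤ ⟪A v, v⟫) : IsUnit A := by
  have hB : IsCoercive ((innerSL ℝ).comp A) :=
    ⟨μ, hμ, fun u => by simpa [sq, mul_assoc] using hA u⟩
  have hsharp : InnerProductSpace.continuousLinearMapOfBilin ((innerSL ℝ).comp A) = A := by
    ext1 u
    refine ext_inner_right ℝ fun w => ?_
    simp [InnerProductSpace.continuousLinearMapOfBilin_apply]
  refine A.isUnit_iff_bijective.mpr ⟨fun u w huw => ?_, ?_⟩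
  · have := A.mul_norm_le_norm_apply_of_coercive hA (u - w)
    rw [map_sub, huw, sub_self, norm_zero] at this
    exact sub_eq_zero.mp (norm_le_zero_iff.mp (nonpos_of_mul_nonpos_right this hμ))
  · have hrange := hB.range_eq_top
    rw [hsharp] at hrange
    exact LinearMap.range_eq_top.mp hrange

theorem ContinuousLinearMap.norm_inverse_apply_le_of_coercive (hμ : 0 < μ)
    (hA : ∀ v, μ * ‖v‖ ^ 2 ≤ ⟪A v, v⟫) (w : V) : ‖Ring.inverse A w‖ ≤ μ⁻¹ * ‖w‖ := by
  have hAinv : A (Ring.inverse A w) = w :=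
    congr($(Ring.mul_inverse_cancel A (A.isUnit_of_coercive hμ hA)) w)
  rw [inv_mul_eq_div, le_div_iff₀' hμ]
  simpa [hAinv] using A.mul_norm_le_norm_apply_of_coercive hA (Ring.inverse A w)

end Coercive

theorem norm_sub_sub_apply_le_of_lipschitz_fderiv {E F : Type*} [NormedAddCommGroup E]
    [NormedSpace ℝ E] [NormedAddCommGroup F] [NormedSpace ℝ F] {g : E → F} {g' : E → E →L[ℝ] F}
    {L : ℝ} (hg : ∀ x, HasFDerivAt g (g' x) x) (hlip : ∀ a b, ‖g' a - g' b‖ ≤ L * ‖a - b‖)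
    (x y : E) : ‖g y - g x - g' x (y - x)‖ ≤ L / 2 * ‖y - x‖ ^ 2 := by
  set v := y - x
  let r : ℝ → F := fun t => g (x + t • v) - g x - t • g' x v
  have hr : ∀ t, HasDerivAt r (g' (x + t • v) v - g' x v) t := fun t => by
    have hline : HasDerivAt (fun t : ℝ => x + t • v) v t := by
      simpa using ((hasDerivAt_id t).smul_const v).const_add x
    exact ((((hg _).comp_hasDerivAt t hline).sub_const (g x)).sub
      ((hasDerivAt_id t).smul_const (g' x v))).congr_deriv (by simp)
  have hbound : ∀ t ∈ Set.Ico (0 : ℝ) 1, ‖g' (x + t • v) v - g' x v‖ ≤ L * ‖v‖ ^ 2 * t := by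
    intro t ht
    calc ‖g' (x + t • v) v - g' x v‖ = ‖(g' (x + t • v) - g' x) v‖ := rfl
      _ ≤ ‖g' (x + t • v) - g' x‖ * ‖v‖ := ContinuousLinearMap.le_opNorm _ _
      _ ≤ L * ‖t • v‖ * ‖v‖ := by
        gcongr
        simpa using hlip (x + t • v) x
      _ = L * ‖v‖ ^ 2 * t := by rw [norm_smul, Real.norm_of_nonneg ht.1]; ring
  have hB : ∀ t : ℝ, HasDerivAt (fun t => L * ‖v‖ ^ 2 * (t ^ 2 / 2)) (L * ‖v‖ ^ 2 * t) t :=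
    fun t => by simpa using ((hasDerivAt_pow 2 t).div_const 2).const_mul (L * ‖v‖ ^ 2)
  have h1 := image_norm_le_of_norm_deriv_right_le_deriv_boundary
    (fun t _ => (hr t).continuousAt.continuousWithinAt) (fun t _ => (hr t).hasDerivWithinAt)
    (by simp [r]) hB hbound (Set.right_mem_Icc.mpr zero_le_one)
  convert h1 using 1
  · simp [r, v]
  · ring

theorem norm_newton_step_sub_le {V : Type*} [NormedAddCommGroup V] [InnerProductSpace ℝ V]
    [CompleteSpace V] {g : V → V} {g' : V → V →L[ℝ] V} {μ L : ℝ} (hμ : 0 < μ)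
    (hg : ∀ x, HasFDerivAt g (g' x) x) (hlip : ∀ a b, ‖g' a - g' b‖ ≤ L * ‖a - b‖)
    {θ θstar : V} (hcoer : ∀ v, μ * ‖v‖ ^ 2 ≤ ⟪g' θ v, v⟫) (hzero : g θstar = 0) :
    ‖θ - Ring.inverse (g' θ) (g θ) - θstar‖ ≤
      μ⁻¹ * (‖g' θ - g' θstar‖ * ‖θ - θstar‖ + L / 2 * ‖θ - θstar‖ ^ 2) := by
  set v := θ - θstar
  have herror : θ - Ring.inverse (g' θ) (g θ) - θstar = Ring.inverse (g' θ) (g' θ v - g θ) := by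
    have hinv : Ring.inverse (g' θ) (g' θ v) = v :=
      congr($(Ring.inverse_mul_cancel _ ((g' θ).isUnit_of_coercive hμ hcoer)) v)
    rw [map_sub, hinv]
    simp only [v]
    abel
  have htaylor := norm_sub_sub_apply_le_of_lipschitz_fderiv hg hlip θstar θ
  rw [hzero, sub_zero] at htaylor
  have hresidual : ‖g' θ v - g θ‖ ≤ ‖g' θ - g' θstar‖ * ‖v‖ + L / 2 * ‖v‖ ^ 2 :=
    calc ‖g' θ v - g θ‖ = ‖(g' θ - g' θstar) v - (g θ - g' θstar v)‖ := by
          rw [sub_apply, sub_sub_sub_cancel_right]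
      _ ≤ ‖g' θ - g' θstar‖ * ‖v‖ + L / 2 * ‖v‖ ^ 2 :=
          (norm_sub_le _ _).trans (add_le_add ((g' θ - g' θstar).le_opNorm v) htaylor)
  rw [herror]
  exact ((g' θ).norm_inverse_apply_le_of_coercive hμ hcoer _).trans
    (mul_le_mul_of_nonneg_left hresidual (inv_nonneg.mpr hμ.le))

theorem ContDiff.differentiable_gradient {E : Type*} [NormedAddCommGroup E]
    [InnerProductSpace ℝ E] [CompleteSpace E] {f : E → ℝ} (hf : ContDiff ℝ 2 f) :
    Differentiable ℝ (gradient f) :=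
  ((InnerProductSpace.toDual ℝ E).symm.contDiff.comp
    (hf.fderiv_right (m := 1) le_rfl)).differentiable one_ne_zero

theorem stmt_3_general {d : ℕ} (f : EuclideanSpace ℝ (Fin d) → ℝ)
    (hf : ContDiff ℝ 2 f) (μ L : ℝ) (hμ : 0 < μ)
    (H : EuclideanSpace ℝ (Fin d) →
      EuclideanSpace ℝ (Fin d) →L[ℝ] EuclideanSpace ℝ (Fin d))
    (hH : ∀ x, H x = fderiv ℝ (gradient f) x)
    (hconv : ∀ x v, μ * ‖v‖ ^ 2 ≤ ⟪H x v, v⟫)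
    (hlip : ∀ a b, ‖H a - H b‖ ≤ L * ‖a - b‖)
    (θstar : EuclideanSpace ℝ (Fin d)) (hmin : gradient f θstar = 0)
    (θ θplus : EuclideanSpace ℝ (Fin d))
    (hplus : θplus = θ - Ring.inverse (H θ) (gradient f θ)) :
    ‖θplus - θstar‖ ^ 2 ≤
      2 / μ ^ 2 * ‖H θ - H θstar‖ ^ 2 * ‖θ - θstar‖ ^ 2 +
        L ^ 2 / (2 * μ ^ 2) * ‖θ - θstar‖ ^ 4 := by
  have hderiv (x) : HasFDerivAt (gradient f) (H x) x :=
    hH x ▸ (hf.differentiable_gradient x).hasFDerivAt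
  have hnewton := norm_newton_step_sub_le hμ hderiv hlip (hconv θ) hmin
  rw [← hplus] at hnewton
  calc ‖θplus - θstar‖ ^ 2
      ≤ (μ⁻¹ * (‖H θ - H θstar‖ * ‖θ - θstar‖ + L / 2 * ‖θ - θstar‖ ^ 2)) ^ 2 :=
        pow_le_pow_left₀ (norm_nonneg _) hnewton 2
    _ ≤ μ⁻¹ ^ 2 *
        (2 * ((‖H θ - H θstar‖ * ‖θ - θstar‖) ^ 2 + (L / 2 * ‖θ - θstar‖ ^ 2) ^ 2)) := by
        rw [mul_pow]; gcongr; exact add_sq_le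
    _ = _ := by field_simp

/-- Newton-step error bound (inequality (17)): for a μ-strongly convex function with
L-Lipschitz Hessian, the Newton iterate satisfies
‖θ⁺ − θ*‖² ≤ (2/μ²)‖∇²f(θ) − ∇²f(θ*)‖²‖θ − θ*‖² + (L²/(2μ²))‖θ − θ*‖⁴. -/
theorem stmt_3 {d : ℕ} (f : EuclideanSpace ℝ (Fin d) → ℝ)
    (hf : ContDiff ℝ 2 f) (μ L : ℝ) (hμ : 0 < μ) (hL : 0 < L)
    (H : EuclideanSpace ℝ (Fin d) →
      EuclideanSpace ℝ (Fin d) →L[ℝ] EuclideanSpace ℝ (Fin d))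
    (hH : ∀ x, H x = fderiv ℝ (gradient f) x)
    (hconv : ∀ x v, μ * ‖v‖ ^ 2 ≤ ⟪H x v, v⟫)
    (hlip : ∀ a b, ‖H a - H b‖ ≤ L * ‖a - b‖)
    (θstar : EuclideanSpace ℝ (Fin d)) (hmin : gradient f θstar = 0)
    (θ θplus : EuclideanSpace ℝ (Fin d))
    (hplus : θplus = θ - Ring.inverse (H θ) (gradient f θ)) :
    ‖θplus - θstar‖ ^ 2 ≤
      2 / μ ^ 2 * ‖H θ - H θstar‖ ^ 2 * ‖θ - θstar‖ ^ 2 +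
        L ^ 2 / (2 * μ ^ 2) * ‖θ - θstar‖ ^ 4 :=
  stmt_3_general f hf μ L hμ H hH hconv hlip θstar hmin θ θplus hplus
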